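/- arXiv:2511.04890 — 2 statements merged into one kernel-verified Lean document; each statement's English description precedes it below -/
import Mathlib

section
/- Let a_0 ≤ a_1 ≤ a_2 ≤ a_3 be pairwise coprime positive integers such that the triple (a_0, a_1, a_2) is not (1,1,1) (i.e. the quadruple is not of the form (1,1,1,t)) and the quadruple (a_0,a_1,a_2,a_3) is not (1,1,2,3). Then a_0 + a_1 + a_2 + a_3 < a_0 · a_1 · a_2 · a_3. -/
theorem stmt_0 (a₀ a₁ a₂ a₃ : ℕ)
    (h₀ : 0 < a₀) (h₁ : 0 < a₁) (h₂ : 0 < a₂) (h₃ : 0 < a₃)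
    (h01 : a₀ ≤ a₁) (h12 : a₁ ≤ a₂) (h23 : a₂ ≤ a₃)
    (c01 : Nat.Coprime a₀ a₁) (c02 : Nat.Coprime a₀ a₂) (c03 : Nat.Coprime a₀ a₃)
    (c12 : Nat.Coprime a₁ a₂) (c13 : Nat.Coprime a₁ a₃) (c23 : Nat.Coprime a₂ a₃)
    (hne1 : ¬ (a₀ = 1 ∧ a₁ = 1 ∧ a₂ = 1))
    (hne2 : ¬ (a₀ = 1 ∧ a₁ = 1 ∧ a₂ = 2 ∧ a₃ = 3)) :
    a₀ + a₁ + a₂ + a₃ < a₀ * a₁ * a₂ * a₃ := by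
  by_cases hP : 5 ≤ a₀ * a₁ * a₂
  · nlinarith [h23, h₃]
  · push_neg at hP
    -- a₀ = 1
    have ha0 : a₀ = 1 := by
      by_contra h
      have h2 : 2 ≤ a₀ := by omega
      have h2' : 2 ≤ a₁ := by omega
      have h2'' : 2 ≤ a₂ := by omega
      have : 2 * 2 * 2 ≤ a₀ * a₁ * a₂ := Nat.mul_le_mul (Nat.mul_le_mul h2 h2') h2''
      omega
    subst ha0
    -- a₁ ≤ 2, and a₁ = 2 is impossible (would force a₂ = 2, not coprime)
    have ha1 : a₁ = 1 := by
      rcases Nat.lt_or_ge a₁ 2 with h | h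
      · omega
      · rw [one_mul] at hP
        have hm : a₁ * 2 ≤ a₁ * a₂ := Nat.mul_le_mul_left _ (le_trans h h12)
        have hm2 : 2 * 2 ≤ a₁ * 2 := Nat.mul_le_mul_right _ h
        have ha2 : a₂ = 2 := by
          by_contra hc
          have : 3 ≤ a₂ := by omega
          have : a₁ * 3 ≤ a₁ * a₂ := Nat.mul_le_mul_left _ this
          nlinarith
        have ha1' : a₁ = 2 := by omega
        rw [ha1', ha2] at c12
        exact absurd c12 (by decide)
    subst ha1
    simp only [one_mul] at hP ⊢
    have ha2 : 2 ≤ a₂ := by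
      rcases Nat.lt_or_ge a₂ 2 with h | h
      · exact absurd ⟨rfl, rfl, by omega⟩ hne1
      · exact h
    interval_cases a₂
    · -- a₂ = 2 : a₃ odd, a₃ ≠ 3
      have hodd : ¬ 2 ∣ a₃ := by
        intro hd
        have : 2 ∣ Nat.gcd 2 a₃ := Nat.dvd_gcd (dvd_refl 2) hd
        rw [c23] at this
        omega
      have hne3 : a₃ ≠ 3 := by
        intro h; exact hne2 ⟨rfl, rfl, rfl, h⟩
      omega
    · -- a₂ = 3 : a₃ ≠ 3
      have hne3 : a₃ ≠ 3 := by
        intro h; rw [h] at c23; exact absurd c23 (by decide)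
      omega
    · -- a₂ = 4
      omega
end

section
/- Let n ≥ 3 and let a_0, …, a_n be pairwise coprime positive integers. Define Θ := max over subsets I ⊆ {0,…,n} with |I| ≥ 4 of (1/∏_{i∉I} a_i) · ((∑_{i∈I} a_i)/(∏_{i∈I} a_i) + (|I| − 3)). Then Θ ≤ 2n − 1. -/
theorem stmt_3 (n : ℕ) (hn : 3 ≤ n) (a : Fin (n + 1) → ℕ)
    (hpos : ∀ i, 0 < a i)
    (hcop : ∀ i j, i ≠ j → Nat.Coprime (a i) (a j)) :
    (Finset.filter (fun I : Finset (Fin (n + 1)) => 4 ≤ I.card) Finset.univ).sup'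
      ⟨Finset.univ, by
        simp only [Finset.mem_filter, Finset.mem_univ, true_and, Finset.card_univ,
          Fintype.card_fin]
        omega⟩
      (fun I =>
        (1 / ∏ i ∈ Iᶜ, (a i : ℚ)) *
          ((∑ i ∈ I, (a i : ℚ)) / (∏ i ∈ I, (a i : ℚ)) + ((I.card : ℚ) - 3)))
      ≤ 2 * (n : ℚ) - 1 := by
  apply Finset.sup'_le
  intro I hI
  simp only [Finset.mem_filter, Finset.mem_univ, true_and] at hI
  have hcardn : I.card ≤ n + 1 := by
    have := Finset.card_le_univ I
    simpa using this
  have hcard : (I.card : ℚ) ≤ (n : ℚ) + 1 := by exact_mod_cast hcardn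
  have h4 : (4 : ℚ) ≤ (I.card : ℚ) := by exact_mod_cast hI
  have hPn : 1 ≤ ∏ i ∈ I, a i := Finset.one_le_prod' fun i _ => hpos i
  have hPcn : 1 ≤ ∏ i ∈ Iᶜ, a i := Finset.one_le_prod' fun i _ => hpos i
  have hP : (1 : ℚ) ≤ ∏ i ∈ I, (a i : ℚ) := by
    rw [← Nat.cast_prod]; exact_mod_cast hPn
  have hPc : (1 : ℚ) ≤ ∏ i ∈ Iᶜ, (a i : ℚ) := by
    rw [← Nat.cast_prod]; exact_mod_cast hPcn
  have hS : (∑ i ∈ I, (a i : ℚ)) ≤ (I.card : ℚ) * ∏ i ∈ I, (a i : ℚ) := by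
    calc ∑ i ∈ I, (a i : ℚ) ≤ ∑ _i ∈ I, ∏ j ∈ I, (a j : ℚ) := by
          apply Finset.sum_le_sum
          intro i hi
          have : a i ≤ ∏ j ∈ I, a j := Finset.single_le_prod' (fun j _ => hpos j) hi
          rw [← Nat.cast_prod]; exact_mod_cast this
      _ = (I.card : ℚ) * ∏ j ∈ I, (a j : ℚ) := by
          rw [Finset.sum_const, nsmul_eq_mul]
  have hSP : (∑ i ∈ I, (a i : ℚ)) / (∏ i ∈ I, (a i : ℚ)) ≤ (I.card : ℚ) := by
    rw [div_le_iff₀ (by linarith)]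
    nlinarith
  have hinv : 1 / (∏ i ∈ Iᶜ, (a i : ℚ)) ≤ 1 := by
    rw [div_le_one (by linarith)]
    exact hPc
  have hSPnn : 0 ≤ (∑ i ∈ I, (a i : ℚ)) / (∏ i ∈ I, (a i : ℚ)) := by positivity
  have hnn : 0 ≤ (∑ i ∈ I, (a i : ℚ)) / (∏ i ∈ I, (a i : ℚ)) + ((I.card : ℚ) - 3) := by
    linarith
  have key : (1 / ∏ i ∈ Iᶜ, (a i : ℚ)) *
      ((∑ i ∈ I, (a i : ℚ)) / (∏ i ∈ I, (a i : ℚ)) + ((I.card : ℚ) - 3))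
      ≤ 1 * ((I.card : ℚ) + ((I.card : ℚ) - 3)) :=
    mul_le_mul hinv (by linarith) hnn (by norm_num)
  have hn3 : (3 : ℚ) ≤ (n : ℚ) := by exact_mod_cast hn
  linarith
end
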